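/- For every positive integer n, the following identity holds in ℤ: 2·∑_{i=0}^{⌊n/2⌋} ∑_{j=0}^{⌊n/2⌋} C(n, i+j) · C(n, h(i,j)) equals 2^{2n−1} if n is even, and 2^{2n−1} − C(2n, n) if n is odd, where in the arguments of C the indices i, j are cast to ℤ. -/

import Mathlib

/-- The extended binomial coefficient `C n m` for `n : ℕ` and `m : ℤ`: equal to
`n.choose m.toNat` when `0 ≤ m ≤ n`, and `0` otherwise. -/
def C (n : ℕ) (m : ℤ) : ℤ :=
  if 0 ≤ m ∧ m ≤ (n : ℤ) then (n.choose m.toNat : ℤ) else 0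

/-- `h i j = i - j - 1` if `j ≤ i`, and `j - i - 1` if `i < j`. -/
def h (i j : ℤ) : ℤ := if j ≤ i then i - j - 1 else j - i - 1

/-!
The diagonal terms vanish since `h i i = -1`. Off the diagonal, the map sending `(i, j)` to the
pair `(i + j, |i - j| - 1)`, ordered so that its larger entry comes first exactly when `i > j`, is
a bijection from `[0, m]²` onto the pairs `(a, b)` with `a + b = 2k + 1`, `k < m`. By Vandermonde
the double sum is therefore `∑_{k < m} C(2n, 2k+1)`, and Pascal's rule turns this into
`∑_{k < 2m} C(2n-1, k)`. For `n = 2m` this is the half-row sum `2^(2n-2)`; for `n = 2m+1` it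
falls short of it by the middle entry `C(2n-1, n-1) = C(2n, n) / 2`.
-/

open Finset

lemma C_natCast (n k : ℕ) : C n k = n.choose k := by
  unfold C
  split_ifs with hk
  · simp
  · rw [Nat.choose_eq_zero_of_lt (by omega), Nat.cast_zero]

lemma C_h_self (n : ℕ) (i : ℤ) : C n (h i i) = 0 := by
  simp [C, h]

lemma h_comm (i j : ℤ) : h i j = h j i := by
  unfold h; split_ifs <;> omega

lemma C_add_mul_C_h_of_lt (n : ℕ) {i j : ℕ} (hji : j < i) :
    C n ((i : ℤ) + j) * C n (h i j) = n.choose (i + j) * n.choose (i - j - 1) := by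
  have hh : h i j = ((i - j - 1 : ℕ) : ℤ) := by unfold h; split_ifs <;> omega
  rw [hh, ← Nat.cast_add, C_natCast, C_natCast]

lemma sum_square_C_add_mul_C_h_eq_sum_antidiagonal (n m : ℕ) :
    ∑ i ∈ range (m + 1), ∑ j ∈ range (m + 1), C n ((i : ℤ) + j) * C n (h i j) =
      ∑ k ∈ range m, ∑ p ∈ antidiagonal (2 * k + 1), (n.choose p.1 * n.choose p.2 : ℤ) := by
  have hoffdiag : ∀ q ∈ range (m + 1) ×ˢ range (m + 1),
      C n ((q.1 : ℤ) + q.2) * C n (h q.1 q.2) ≠ 0 → q.1 ≠ q.2 := by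
    rintro ⟨i, j⟩ - hne (rfl : i = j)
    exact hne (by rw [C_h_self, mul_zero])
  have hmem : ∀ q : ℕ × (ℕ × ℕ),
      q ∈ (range m ×ˢ (range (2 * m) ×ˢ range (2 * m))).filter
          (fun q => q.2.1 + q.2.2 = 2 * q.1 + 1) ↔
        q.1 ∈ range m ∧ q.2 ∈ antidiagonal (2 * q.1 + 1) := by
    rintro ⟨k, a, b⟩
    simp only [mem_filter, mem_product, mem_range, HasAntidiagonal.mem_antidiagonal]
    omega
  rw [← sum_product', ← sum_filter_of_ne hoffdiag, ← sum_finset_product' _ _ _ hmem]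
  refine sum_nbij' (fun q => if q.2 < q.1 then (q.1 - 1, q.1 + q.2, q.1 - q.2 - 1)
      else (q.2 - 1, q.2 - q.1 - 1, q.1 + q.2))
    (fun q => if q.2.2 < q.2.1 then (q.1 + 1, q.1 - q.2.2) else (q.1 - q.2.1, q.1 + 1))
    ?_ ?_ ?_ ?_ ?_
  · rintro ⟨i, j⟩ hq
    simp only [mem_filter, mem_product, mem_range] at hq ⊢
    split_ifs <;> simp only <;> omega
  · rintro ⟨k, a, b⟩ hq
    simp only [mem_filter, mem_product, mem_range] at hq ⊢
    split_ifs <;> simp only <;> omega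
  · rintro ⟨i, j⟩ hq
    simp only [mem_filter, mem_product, mem_range] at hq
    split_ifs <;> simp only [Prod.mk.injEq] at * <;> omega
  · rintro ⟨k, a, b⟩ hq
    simp only [mem_filter, mem_product, mem_range] at hq
    split_ifs <;> simp only [Prod.mk.injEq] at * <;> omega
  · rintro ⟨i, j⟩ hq
    simp only [mem_filter, mem_product, mem_range] at hq
    rcases lt_or_gt_of_ne hq.2 with hij | hji
    · rw [if_neg (by omega), h_comm, add_comm, C_add_mul_C_h_of_lt n hij, mul_comm]
      simp only
      congr 3; omega
    · rw [if_pos hji, C_add_mul_C_h_of_lt n hji]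

lemma sum_range_succ_choose_two_mul_add_one (N m : ℕ) :
    ∑ k ∈ range m, (N + 1).choose (2 * k + 1) = ∑ k ∈ range (2 * m), N.choose k := by
  induction m with
  | zero => simp
  | succ m ih =>
    rw [sum_range_succ, ih, Nat.choose_succ_succ', mul_add_one, sum_range_succ, sum_range_succ,
      add_assoc]

lemma two_mul_sum_range_choose_odd_add_ite {n : ℕ} (hn : n ≠ 0) :
    2 * ∑ k ∈ range (n / 2), (2 * n).choose (2 * k + 1) + (if Even n then 0 else (2 * n).choose n)
      = 2 ^ (2 * n - 1) := by
  obtain ⟨N, rfl⟩ := Nat.exists_eq_succ_of_ne_zero hn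
  have halfway : ∑ k ∈ range (N + 1), (2 * N + 1).choose k = 4 ^ N :=
    Nat.sum_range_choose_halfway N
  rw [show 2 * (N + 1) = 2 * N + 1 + 1 by ring, sum_range_succ_choose_two_mul_add_one,
    Nat.add_sub_cancel, pow_succ', pow_mul]
  rcases Nat.even_or_odd (N + 1) with heven | hodd
  · rw [if_pos heven, Nat.two_mul_div_two_of_even heven, halfway]
    norm_num
  · rw [if_neg (Nat.not_even_iff_odd.mpr hodd), Nat.two_mul_odd_div_two (Nat.odd_iff.mp hodd),
      Nat.add_sub_cancel, Nat.choose_succ_succ', Nat.choose_symm_half, ← two_mul, ← mul_add,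
      ← sum_range_succ, halfway]
    norm_num

/-- Twice the double sum of `C n (i+j) * C n (h i j)` over `0 ≤ i, j ≤ ⌊n/2⌋`
equals `2^(2n-1)` for `n` even and `2^(2n-1) - C (2n) n` for `n` odd. -/
theorem sum_mixed_identity (n : ℕ) (hn : 1 ≤ n) :
    2 * ∑ i ∈ Finset.range (n / 2 + 1), ∑ j ∈ Finset.range (n / 2 + 1),
        C n ((i : ℤ) + j) * C n (h i j) =
      if Even n then (2 : ℤ) ^ (2 * n - 1)
      else (2 : ℤ) ^ (2 * n - 1) - C (2 * n) n := by
  have vandermonde (k : ℕ) :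
      ∑ p ∈ antidiagonal k, (n.choose p.1 * n.choose p.2 : ℤ) = (2 * n).choose k := by
    exact_mod_cast (two_mul n ▸ Nat.add_choose_eq n n k).symm
  have key := two_mul_sum_range_choose_odd_add_ite (n := n) (by omega)
  rw [sum_square_C_add_mul_C_h_eq_sum_antidiagonal, C_natCast]
  simp_rw [vandermonde]
  split_ifs with heven
  · rw [if_pos heven, add_zero] at key
    exact_mod_cast key
  · rw [if_neg heven] at key
    exact eq_sub_of_add_eq (by exact_mod_cast key)
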